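/- arXiv:2003.05617 — 3 statements merged into one kernel-verified Lean document; each statement's English description precedes it below -/
import Mathlib

section
/- Let V : ℝ × ℝⁿ → ℝ be continuously differentiable, x : [0,T] → ℝⁿ continuously differentiable, and d, z integrable signals with values in ℝ^{nd}, ℝ^{nz}. Suppose that for all t ∈ [0,T], (d/dt) V(t, x(t)) + z(t)ᵀ M z(t) ≤ d(t)ᵀ d(t) whenever V(t,x(t)) ≤ γ + R². If V(0, x(0)) ≤ γ, ∫₀ᵗ z(τ)ᵀ M z(τ) dτ ≥ 0 for all t ∈ [0,T], and ∫₀ᵀ d(t)ᵀ d(t) dt < R², then V(t, x(t)) ≤ γ + R² for all t ∈ [0,T]. -/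
open MeasureTheory Set Matrix

/-!
Along the trajectory, `W t = V (t, x t)` obeys the dissipation inequality as long as it stays
below `γ + R²`. Integrating it from `0` to any `s` up to which this is known, and discarding the
nonnegative IQC term, gives `W s - W 0 ≤ ∫₀ˢ dᵀd ≤ ∫₀ᵀ dᵀd < R²`, so `W s < γ + R²`. At the first
time where `W` would reach `γ + R²` this is a contradiction.
-/

theorem forall_lt_of_forall_Ico_le_imp_lt {α β : Type*} [ConditionallyCompleteLinearOrder α]
    [TopologicalSpace α] [OrderTopology α] [LinearOrder β] [TopologicalSpace β]
    [ClosedIciTopology β] {f : α → β} {a b : α} {c : β} (hf : ContinuousOn f (Icc a b))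
    (hstep : ∀ s ∈ Icc a b, (∀ t ∈ Ico a s, f t ≤ c) → f s < c) :
    ∀ t ∈ Icc a b, f t < c := by
  by_contra! hbad
  set S := Icc a b ∩ f ⁻¹' Ici c
  have hS_closed : IsClosed S := hf.preimage_isClosed_of_isClosed isClosed_Icc isClosed_Ici
  have hS_bdd : BddBelow S := ⟨a, fun t ht => ht.1.1⟩
  obtain ⟨hmin_mem, hmin_ge⟩ : sInf S ∈ S := hS_closed.csInf_mem hbad hS_bdd
  refine (hstep _ hmin_mem fun t ht => ?_).not_ge hmin_ge
  by_contra! hlt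
  exact notMem_of_lt_csInf ht.2 hS_bdd ⟨⟨ht.1, ht.2.le.trans hmin_mem.2⟩, hlt.le⟩

theorem brs_hard_iqc_invariance_general
    {n nd nz : ℕ} (T γ R : ℝ)
    (M : Matrix (Fin nz) (Fin nz) ℝ)
    (V : ℝ × (Fin n → ℝ) → ℝ) (x : ℝ → Fin n → ℝ)
    (d : ℝ → Fin nd → ℝ) (z : ℝ → Fin nz → ℝ)
    (hV : ContDiff ℝ 1 V) (hx : ContDiff ℝ 1 x)
    (hdint : IntervalIntegrable (fun t => d t ⬝ᵥ d t) volume 0 T)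
    (hzint : IntervalIntegrable (fun t => z t ⬝ᵥ M.mulVec (z t)) volume 0 T)
    (hdiss : ∀ t ∈ Icc (0:ℝ) T, V (t, x t) ≤ γ + R ^ 2 →
      deriv (fun s => V (s, x s)) t + z t ⬝ᵥ M.mulVec (z t) ≤ d t ⬝ᵥ d t)
    (h0 : V (0, x 0) ≤ γ)
    (hIQC : ∀ t ∈ Icc (0:ℝ) T, 0 ≤ ∫ τ in (0:ℝ)..t, z τ ⬝ᵥ M.mulVec (z τ))
    (hE : (∫ t in (0:ℝ)..T, d t ⬝ᵥ d t) < R ^ 2) :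
    ∀ t ∈ Icc (0:ℝ) T, V (t, x t) ≤ γ + R ^ 2 := by
  set W : ℝ → ℝ := fun s => V (s, x s)
  have hW : ContDiff ℝ 1 W := hV.comp (contDiff_id.prodMk hx)
  refine fun t ht => (forall_lt_of_forall_Ico_le_imp_lt hW.continuous.continuousOn
    (fun s hs hbelow => ?_) t ht).le
  have hsub : uIcc 0 s ⊆ uIcc 0 T := uIcc_subset_uIcc_left (Icc_subset_uIcc hs)
  have hdint_s := hdint.mono_set hsub
  have hzint_s := hzint.mono_set hsub
  have hdissipation : W s - W 0 ≤ ∫ τ in (0:ℝ)..s, (d τ ⬝ᵥ d τ - z τ ⬝ᵥ M.mulVec (z τ)) :=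
    intervalIntegral.sub_le_integral_of_hasDeriv_right_of_le hs.1 hW.continuous.continuousOn
      (fun τ _ => ((hW.differentiable one_ne_zero) τ).hasDerivAt.hasDerivWithinAt)
      ((intervalIntegrable_iff_integrableOn_Icc_of_le hs.1).1 (hdint_s.sub hzint_s))
      (fun τ hτ => le_sub_iff_add_le.2 <|
        hdiss τ ⟨hτ.1.le, hτ.2.le.trans hs.2⟩ (hbelow τ ⟨hτ.1.le, hτ.2⟩))
  have henergy : (∫ τ in (0:ℝ)..s, d τ ⬝ᵥ d τ) ≤ ∫ τ in (0:ℝ)..T, d τ ⬝ᵥ d τ :=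
    intervalIntegral.integral_mono_interval le_rfl hs.1 hs.2
      (Filter.Eventually.of_forall fun τ => Finset.sum_nonneg fun i _ => mul_self_nonneg _) hdint
  rw [intervalIntegral.integral_sub hdint_s hzint_s] at hdissipation
  linarith [hIQC s hs]

/-- Invariance argument in the proof of Theorem 1 (hard IQC dissipation):
if the dissipation inequality holds on the sublevel set, the IQC integral is
nonnegative on every finite horizon, and the disturbance energy is below `R^2`,
then trajectories starting in the `γ` sublevel set stay in the `γ + R²` sublevel set. -/
theorem brs_hard_iqc_invariance
    {n nd nz : ℕ} (T γ R : ℝ) (hT : 0 < T) (hR : 0 < R)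
    (M : Matrix (Fin nz) (Fin nz) ℝ) (hM : M.IsSymm)
    (V : ℝ × (Fin n → ℝ) → ℝ) (x : ℝ → Fin n → ℝ)
    (d : ℝ → Fin nd → ℝ) (z : ℝ → Fin nz → ℝ)
    (hV : ContDiff ℝ 1 V) (hx : ContDiff ℝ 1 x)
    (hdint : IntervalIntegrable (fun t => d t ⬝ᵥ d t) volume 0 T)
    (hzint : IntervalIntegrable (fun t => z t ⬝ᵥ M.mulVec (z t)) volume 0 T)
    (hdiss : ∀ t ∈ Icc (0:ℝ) T, V (t, x t) ≤ γ + R ^ 2 →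
      deriv (fun s => V (s, x s)) t + z t ⬝ᵥ M.mulVec (z t) ≤ d t ⬝ᵥ d t)
    (h0 : V (0, x 0) ≤ γ)
    (hIQC : ∀ t ∈ Icc (0:ℝ) T, 0 ≤ ∫ τ in (0:ℝ)..t, z τ ⬝ᵥ M.mulVec (z τ))
    (hE : (∫ t in (0:ℝ)..T, d t ⬝ᵥ d t) < R ^ 2) :
    ∀ t ∈ Icc (0:ℝ) T, V (t, x t) ≤ γ + R ^ 2 :=
  brs_hard_iqc_invariance_general T γ R M V x d z hV hx hdint hzint hdiss h0 hIQC hE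
end

section
/- Let V : [0,T] × ℝⁿ → ℝ be C¹ and x : [0,T] → ℝⁿ be C¹ solving ẋ(t) = F(x(t), w(t), d(t)) with continuous w, d. Suppose for all t ∈ [0,T] with V(t, x(t)) ≤ γ + R² we have ∂ₜV(t,x(t)) + ∇ₓV(t,x(t))·F(x(t),w(t),d(t)) + z(t)ᵀMz(t) ≤ d(t)ᵀd(t), that ∫₀ᵀ ‖d(t)‖² dt < R², that ∫₀ᵗ z(τ)ᵀMz(τ)dτ ≥ 0 for all t ∈ [0,T], and V(0,x(0)) ≤ γ. If additionally {ξ : V(T, ξ) ≤ γ + R²} ⊆ X_T for a set X_T ⊆ ℝⁿ, then x(T) ∈ X_T. -/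
/-!
Along the trajectory, `φ t = V (t, x t)` satisfies `φ' ≤ ‖d‖² - zᵀMz` as long as `φ` stays below
the level `γ + R²`. Integrating, `φ t ≤ γ + ∫₀ᵗ ‖d‖² - ∫₀ᵗ zᵀMz`, and by the hard IQC and the energy
bound the right-hand side stays strictly below `γ + R²`, so the trajectory never reaches the level
set where the dissipation inequality would stop holding.
-/

open MeasureTheory Set Matrix

theorem lt_of_hasDerivAt_le_of_integral_le {φ φ' r : ℝ → ℝ} {a b L K : ℝ}
    (hφ : ∀ t ∈ Icc a b, HasDerivAt φ (φ' t) t) (hr : Continuous r)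
    (hdiss : ∀ t ∈ Ico a b, φ t ≤ L → φ' t ≤ r t)
    (hbudget : ∀ t ∈ Icc a b, ∫ τ in a..t, r τ ≤ K) (hK : φ a + K < L) :
    ∀ t ∈ Icc a b, φ t < L := by
  obtain ⟨ε, hε, hεb⟩ := exists_pos_mul_lt (sub_pos.2 hK) (b - a)
  -- Tilting the barrier by `ε` makes its slope strictly exceed `φ'` wherever `φ` touches it.
  set B : ℝ → ℝ := fun t => φ a + (∫ τ in a..t, r τ) + (t - a) * ε
  have hB_lt : ∀ t ∈ Icc a b, B t < L := fun t ht => by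
    simp only [B]
    have : (t - a) * ε ≤ (b - a) * ε := by gcongr; exact ht.2
    linarith [hbudget t ht]
  have hB' : ∀ t, HasDerivAt B (r t + ε) t := fun t => by
    have h := ((hr.integral_hasStrictDerivAt a t).hasDerivAt.const_add (φ a)).add
      (((hasDerivAt_id t).sub_const a).mul_const ε)
    rwa [one_mul] at h
  have hφ_le_B : ∀ t ∈ Icc a b, φ t ≤ B t := by
    refine image_le_of_deriv_right_lt_deriv_boundary
      (fun t ht => (hφ t ht).continuousAt.continuousWithinAt)
      (fun t ht => (hφ t (Ico_subset_Icc_self ht)).hasDerivWithinAt) (by simp [B]) hB' ?_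
    intro t ht hφB
    have := hdiss t ht (hφB.trans_lt (hB_lt t (Ico_subset_Icc_self ht))).le
    linarith
  exact fun t ht => (hφ_le_B t ht).trans_lt (hB_lt t ht)

theorem integral_sub_le_integral_of_nonneg {e q : ℝ → ℝ} {a b t : ℝ} (he : Continuous e)
    (hq : Continuous q) (he0 : ∀ τ, 0 ≤ e τ) (ht : t ∈ Icc a b) (hq0 : 0 ≤ ∫ τ in a..t, q τ) :
    ∫ τ in a..t, (e τ - q τ) ≤ ∫ τ in a..b, e τ := by
  rw [intervalIntegral.integral_sub (he.intervalIntegrable a t) (hq.intervalIntegrable a t)]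
  have := intervalIntegral.integral_mono_interval (μ := volume) le_rfl ht.1 ht.2
    (Filter.Eventually.of_forall he0) (he.intervalIntegrable a b)
  linarith

theorem brs_hard_iqc_reach_target_general
    {n nw nd nz : ℕ} (T γ R : ℝ) (hT : 0 < T)
    (M : Matrix (Fin nz) (Fin nz) ℝ)
    (V : ℝ × (Fin n → ℝ) → ℝ) (hV : ContDiff ℝ 1 V)
    (F : (Fin n → ℝ) → (Fin nw → ℝ) → (Fin nd → ℝ) → (Fin n → ℝ))
    (x : ℝ → Fin n → ℝ)
    (w : ℝ → Fin nw → ℝ)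
    (d : ℝ → Fin nd → ℝ) (hd : Continuous d)
    (z : ℝ → Fin nz → ℝ) (hz : Continuous z)
    (hODE : ∀ t ∈ Icc (0:ℝ) T, HasDerivAt x (F (x t) (w t) (d t)) t)
    (hdiss : ∀ t ∈ Icc (0:ℝ) T, V (t, x t) ≤ γ + R ^ 2 →
      fderiv ℝ V (t, x t) (1, F (x t) (w t) (d t))
        + z t ⬝ᵥ M.mulVec (z t) ≤ d t ⬝ᵥ d t)
    (hE : (∫ t in (0:ℝ)..T, d t ⬝ᵥ d t) < R ^ 2)
    (hIQC : ∀ t ∈ Icc (0:ℝ) T, 0 ≤ ∫ τ in (0:ℝ)..t, z τ ⬝ᵥ M.mulVec (z τ))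
    (h0 : V (0, x 0) ≤ γ)
    (XT : Set (Fin n → ℝ))
    (hXT : {ξ : Fin n → ℝ | V (T, ξ) ≤ γ + R ^ 2} ⊆ XT) :
    x T ∈ XT := by
  have he : Continuous fun t => d t ⬝ᵥ d t := hd.dotProduct hd
  have hq : Continuous fun t => z t ⬝ᵥ M *ᵥ z t :=
    hz.dotProduct (continuous_const.matrix_mulVec hz)
  have hφ : ∀ t ∈ Icc 0 T, HasDerivAt (fun s => V (s, x s))
      (fderiv ℝ V (t, x t) (1, F (x t) (w t) (d t))) t := fun t ht =>
    (hV.differentiable one_ne_zero (t, x t)).hasFDerivAt.comp_hasDerivAt t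
      ((hasDerivAt_id t).prodMk (hODE t ht))
  have hVT := lt_of_hasDerivAt_le_of_integral_le
    (r := fun t => d t ⬝ᵥ d t - z t ⬝ᵥ M *ᵥ z t) hφ (he.sub hq)
    (fun t ht hVt => by linarith [hdiss t (Ico_subset_Icc_self ht) hVt])
    (fun t ht => integral_sub_le_integral_of_nonneg he hq
      (fun τ => dotProduct_self_star_nonneg (d τ)) ht (hIQC t ht))
    (by linarith) T (right_mem_Icc.2 hT.le)
  exact hXT hVT.le

/-- Theorem 1 (hard IQC dissipation reachability) for a single trajectory:
the dissipation inequality, the hard IQC, the disturbance energy bound, and the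
target-set containment imply that the trajectory reaches the target set at time `T`. -/
theorem brs_hard_iqc_reach_target
    {n nw nd nz : ℕ} (T γ R : ℝ) (hT : 0 < T) (hR : 0 < R)
    (M : Matrix (Fin nz) (Fin nz) ℝ) (hM : M.IsSymm)
    (V : ℝ × (Fin n → ℝ) → ℝ) (hV : ContDiff ℝ 1 V)
    (F : (Fin n → ℝ) → (Fin nw → ℝ) → (Fin nd → ℝ) → (Fin n → ℝ))
    (hF : Continuous fun p : (Fin n → ℝ) × (Fin nw → ℝ) × (Fin nd → ℝ) =>
      F p.1 p.2.1 p.2.2)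
    (x : ℝ → Fin n → ℝ) (hx : ContDiff ℝ 1 x)
    (w : ℝ → Fin nw → ℝ) (hw : Continuous w)
    (d : ℝ → Fin nd → ℝ) (hd : Continuous d)
    (z : ℝ → Fin nz → ℝ) (hz : Continuous z)
    (hODE : ∀ t ∈ Icc (0:ℝ) T, HasDerivAt x (F (x t) (w t) (d t)) t)
    (hdiss : ∀ t ∈ Icc (0:ℝ) T, V (t, x t) ≤ γ + R ^ 2 →
      fderiv ℝ V (t, x t) (1, F (x t) (w t) (d t))
        + z t ⬝ᵥ M.mulVec (z t) ≤ d t ⬝ᵥ d t)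
    (hE : (∫ t in (0:ℝ)..T, d t ⬝ᵥ d t) < R ^ 2)
    (hIQC : ∀ t ∈ Icc (0:ℝ) T, 0 ≤ ∫ τ in (0:ℝ)..t, z τ ⬝ᵥ M.mulVec (z τ))
    (h0 : V (0, x 0) ≤ γ)
    (XT : Set (Fin n → ℝ))
    (hXT : {ξ : Fin n → ℝ | V (T, ξ) ≤ γ + R ^ 2} ⊆ XT) :
    x T ∈ XT :=
  brs_hard_iqc_reach_target_general T γ R hT M V hV F x w d hd z hz hODE hdiss hE hIQC h0 XT hXT
end

section
/- Let V : [0,T] × ℝⁿ → ℝ be C¹, x : [0,T] → ℝⁿ a C¹ trajectory, z, d continuous signals, Y₂₂ ∈ 𝕊^{nψ}, and x_ψ(t) the last nψ components of x(t). Define 𝒱(t, x) := V(t, x) − x_ψᵀ Y₂₂ x_ψ. Assume: (i) for all t ∈ [0,T] with 𝒱(t,x(t)) ≤ γ + R², (d/dt)V(t,x(t)) + z(t)ᵀMz(t) ≤ d(t)ᵀd(t); (ii) V(0,x(0)) ≤ γ; (iii) ∫₀ᵀ ‖d‖² < R²; (iv) ∫₀ᵗ zᵀMz dτ ≥ −x_ψ(t)ᵀ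 Y₂₂ x_ψ(t) for all t ∈ [0,T]. Then 𝒱(T, x(T)) < γ + R². -/
open MeasureTheory Set Matrix

/-!
Put `F(t) = V(t, x(t)) + ∫₀ᵗ zᵀMz - ∫₀ᵗ dᵀd`. The IQC bound (iv) together with `dᵀd ≥ 0` gives
`𝒱(t, x(t)) ≤ F(t) + ∫₀ᵀ dᵀd`, and the energy bound (iii) leaves the margin
`δ = R² - ∫₀ᵀ dᵀd > 0`. Hence whenever `F(t) ≤ γ + δ` the dissipation inequality (i) applies
and `F' ≤ 0`; since `F(0) ≤ γ`, a barrier argument keeps `F ≤ γ` on `[0, T]`, so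
`𝒱(T, x(T)) ≤ γ + ∫₀ᵀ dᵀd < γ + R²`.
-/

theorem le_of_hasDerivWithinAt_nonpos_of_le_add {f f' : ℝ → ℝ} {a b c δ : ℝ} (hδ : 0 < δ)
    (hf : ContinuousOn f (Icc a b)) (hf' : ∀ t ∈ Ico a b, HasDerivWithinAt f (f' t) (Ici t) t)
    (ha : f a ≤ c) (hdecr : ∀ t ∈ Ico a b, f t ≤ c + δ → f' t ≤ 0) :
    ∀ t ∈ Icc a b, f t ≤ c := by
  intro t ht
  refine le_of_forall_pos_lt_add fun ε hε => ?_
  have hab : 0 ≤ b - a := by linarith [ht.1, ht.2]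
  -- compare `f` with the barrier `c + κ (s - a)`, whose slope `κ > 0` beats `f' ≤ 0`
  set κ := min ε δ / (b - a + 1)
  have hκ : 0 < κ := div_pos (lt_min hε hδ) (by linarith)
  have hκb : κ * (b - a) < min ε δ := by
    have hκ_mul : κ * (b - a + 1) = min ε δ := div_mul_cancel₀ _ (by linarith)
    nlinarith
  have hbarrier := image_le_of_deriv_right_lt_deriv_boundary' hf hf'
    (B := fun s => c + κ * (s - a)) (B' := fun _ => κ) (by simpa using ha)
    (by fun_prop)
    (fun s _ => (((hasDerivAt_id s).sub_const a).const_mul κ |>.const_add c).hasDerivWithinAt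
      |>.congr_deriv (by ring))
    (fun s hs hfs => by
      have hBs : κ * (s - a) ≤ κ * (b - a) := by gcongr; exact hs.2.le
      have hf's := hdecr s hs (by rw [hfs]; linarith [min_le_right ε δ])
      linarith)
    ht
  have hBt : κ * (t - a) ≤ κ * (b - a) := by gcongr; exact ht.2
  linarith [min_le_left ε δ, hbarrier]

theorem lt_add_of_dissipation_on_sublevel {U S S' p q : ℝ → ℝ} {T γ ρ : ℝ} (hT : 0 ≤ T)
    (hS : ∀ t ∈ Icc 0 T, HasDerivAt S (S' t) t) (hp : Continuous p) (hq : Continuous q)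
    (hq_nonneg : ∀ t, 0 ≤ q t) (hUS : ∀ t ∈ Icc 0 T, U t ≤ S t + ∫ τ in (0:ℝ)..t, p τ)
    (h0 : S 0 ≤ γ) (hE : ∫ τ in (0:ℝ)..T, q τ < ρ)
    (hdiss : ∀ t ∈ Icc 0 T, U t ≤ γ + ρ → S' t + p t ≤ q t) :
    U T < γ + ρ := by
  set F : ℝ → ℝ := fun t => S t + (∫ τ in (0:ℝ)..t, p τ) - ∫ τ in (0:ℝ)..t, q τ
  have hF' : ∀ t ∈ Icc 0 T, HasDerivAt F (S' t + p t - q t) t := fun t ht =>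
    ((hS t ht).add (hp.integral_hasStrictDerivAt 0 t).hasDerivAt).sub
      (hq.integral_hasStrictDerivAt 0 t).hasDerivAt
  have hQ : ∀ t ∈ Icc 0 T, ∫ τ in (0:ℝ)..t, q τ ≤ ∫ τ in (0:ℝ)..T, q τ := fun t ht =>
    intervalIntegral.integral_mono_interval le_rfl ht.1 ht.2
      (Filter.Eventually.of_forall hq_nonneg) (hq.intervalIntegrable 0 T)
  have hUF : ∀ t ∈ Icc 0 T, U t ≤ F t + ∫ τ in (0:ℝ)..T, q τ := fun t ht => by
    linarith [hUS t ht, hQ t ht]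
  have hFγ : ∀ t ∈ Icc 0 T, F t ≤ γ :=
    le_of_hasDerivWithinAt_nonpos_of_le_add (sub_pos.2 hE)
      (fun t ht => (hF' t ht).continuousAt.continuousWithinAt)
      (fun t ht => (hF' t (Ico_subset_Icc_self ht)).hasDerivWithinAt)
      (by simpa [F] using h0)
      (fun t ht hFt => by
        have ht' := Ico_subset_Icc_self ht
        linarith [hdiss t ht' (by linarith [hUF t ht'])])
  have hT' : T ∈ Icc 0 T := ⟨hT, le_rfl⟩
  linarith [hUF T hT', hFγ T hT']

theorem brs_soft_iqc_final_bound_general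
    {n nψ nd nz : ℕ} (T γ R : ℝ) (hT : 0 < T)
    (M : Matrix (Fin nz) (Fin nz) ℝ)
    (Y22 : Matrix (Fin nψ) (Fin nψ) ℝ)
    (V : ℝ × (Fin (n + nψ) → ℝ) → ℝ) (hV : ContDiff ℝ 1 V)
    (x : ℝ → Fin (n + nψ) → ℝ) (hx : ContDiff ℝ 1 x)
    (z : ℝ → Fin nz → ℝ) (hz : Continuous z)
    (d : ℝ → Fin nd → ℝ) (hd : Continuous d)
    -- the last nψ components of the state, i.e. the filter state x_ψ
    (xψ : ℝ → Fin nψ → ℝ) (hxψ : ∀ t i, xψ t i = x t (Fin.natAdd n i))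
    -- the shifted storage function
    (𝒱 : ℝ → (Fin (n + nψ) → ℝ) → ℝ)
    (h𝒱 : ∀ t ξ, 𝒱 t ξ = V (t, ξ) -
      ((fun i => ξ (Fin.natAdd n i)) ⬝ᵥ Y22.mulVec (fun i => ξ (Fin.natAdd n i))))
    (hdiss : ∀ t ∈ Icc (0:ℝ) T, 𝒱 t (x t) ≤ γ + R ^ 2 →
      deriv (fun s => V (s, x s)) t + z t ⬝ᵥ M.mulVec (z t) ≤ d t ⬝ᵥ d t)
    (h0 : V (0, x 0) ≤ γ)
    (hE : (∫ t in (0:ℝ)..T, d t ⬝ᵥ d t) < R ^ 2)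
    (hIQC : ∀ t ∈ Icc (0:ℝ) T,
      -(xψ t ⬝ᵥ Y22.mulVec (xψ t)) ≤ ∫ τ in (0:ℝ)..t, z τ ⬝ᵥ M.mulVec (z τ)) :
    𝒱 T (x T) < γ + R ^ 2 := by
  have hstorage : Differentiable ℝ fun s => V (s, x s) :=
    (hV.comp (contDiff_id.prodMk hx)).differentiable one_ne_zero
  have hxψ_eq : ∀ t, xψ t = fun i => x t (Fin.natAdd n i) := fun t => funext (hxψ t)
  refine lt_add_of_dissipation_on_sublevel (U := fun t => 𝒱 t (x t)) (S := fun s => V (s, x s))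
    (p := fun t => z t ⬝ᵥ M.mulVec (z t)) (q := fun t => d t ⬝ᵥ d t) hT.le
    (fun t _ => (hstorage t).hasDerivAt)
    (hz.dotProduct (continuous_const.matrix_mulVec hz)) (hd.dotProduct hd)
    (fun t => by simpa using dotProduct_self_star_nonneg (d t))
    (fun t ht => ?_) h0 hE hdiss
  have hIQCt := hIQC t ht
  rw [hxψ_eq t] at hIQCt
  rw [h𝒱]
  linarith

/-- Trajectory-level conclusion in the proof of Theorem 3 (soft IQC reachability):
with the shifted storage function `𝒱(t,x) = V(t,x) − x_ψᵀ Y₂₂ x_ψ`, the dissipation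
inequality on the `𝒱`-sublevel set, the soft-IQC finite-horizon lower bound, and the
disturbance energy bound imply `𝒱(T, x(T)) < γ + R²`. -/
theorem brs_soft_iqc_final_bound
    {n nψ nd nz : ℕ} (T γ R : ℝ) (hT : 0 < T) (hR : 0 < R)
    (M : Matrix (Fin nz) (Fin nz) ℝ) (hM : M.IsSymm)
    (Y22 : Matrix (Fin nψ) (Fin nψ) ℝ) (hY22 : Y22.IsSymm)
    (V : ℝ × (Fin (n + nψ) → ℝ) → ℝ) (hV : ContDiff ℝ 1 V)
    (x : ℝ → Fin (n + nψ) → ℝ) (hx : ContDiff ℝ 1 x)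
    (z : ℝ → Fin nz → ℝ) (hz : Continuous z)
    (d : ℝ → Fin nd → ℝ) (hd : Continuous d)
    -- the last nψ components of the state, i.e. the filter state x_ψ
    (xψ : ℝ → Fin nψ → ℝ) (hxψ : ∀ t i, xψ t i = x t (Fin.natAdd n i))
    -- the shifted storage function
    (𝒱 : ℝ → (Fin (n + nψ) → ℝ) → ℝ)
    (h𝒱 : ∀ t ξ, 𝒱 t ξ = V (t, ξ) -
      ((fun i => ξ (Fin.natAdd n i)) ⬝ᵥ Y22.mulVec (fun i => ξ (Fin.natAdd n i))))
    (hdiss : ∀ t ∈ Icc (0:ℝ) T, 𝒱 t (x t) ≤ γ + R ^ 2 →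
      deriv (fun s => V (s, x s)) t + z t ⬝ᵥ M.mulVec (z t) ≤ d t ⬝ᵥ d t)
    (h0 : V (0, x 0) ≤ γ)
    (hE : (∫ t in (0:ℝ)..T, d t ⬝ᵥ d t) < R ^ 2)
    (hIQC : ∀ t ∈ Icc (0:ℝ) T,
      -(xψ t ⬝ᵥ Y22.mulVec (xψ t)) ≤ ∫ τ in (0:ℝ)..t, z τ ⬝ᵥ M.mulVec (z τ)) :
    𝒱 T (x T) < γ + R ^ 2 :=
  brs_soft_iqc_final_bound_general T γ R hT M Y22 V hV x hx z hz d hd xψ hxψ 𝒱 h𝒱 hdiss h0 hE hIQC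
end
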